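/- arXiv:2110.00718 — 5 statements merged into one kernel-verified Lean document; each statement's English description precedes it below -/
import Mathlib

section
/- For every graph G and every field F, G is 2-colorable if and only if the local orthogonality dimension of G over F is at most 2. -/
open Matrix

/-- An orthogonal representation of a graph `G` over a field `F` in dimension `t`. -/
def IsOrthRep {V F : Type*} [Field F] {t : ℕ} (G : SimpleGraph V) (u : V → Fin t → F) : Prop :=
  (∀ v, u v ⬝ᵥ u v ≠ 0) ∧ ∀ ⦃v w⦄, G.Adj v w → u v ⬝ᵥ u w = 0

/-- The representation has locality at most `ℓ`: the span of the vectors of every closed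
neighborhood has dimension at most `ℓ`. -/
def RepLocalityLE {V F : Type*} [Field F] {t : ℕ} (G : SimpleGraph V) (u : V → Fin t → F)
    (ℓ : ℕ) : Prop :=
  ∀ v, Module.finrank F (Submodule.span F (u '' insert v (G.neighborSet v))) ≤ ℓ

/-- The local orthogonality dimension of `G` over `F`. -/
noncomputable def locOrthDim {V : Type*} (G : SimpleGraph V) (F : Type*) [Field F] : ℕ :=
  sInf {ℓ | ∃ t : ℕ, ∃ u : V → Fin t → F, IsOrthRep G u ∧ RepLocalityLE G u ℓ}

/-- The orthogonality dimension of `G` over `F`. -/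
noncomputable def orthDim {V : Type*} (G : SimpleGraph V) (F : Type*) [Field F] : ℕ :=
  sInf {t | ∃ u : V → Fin t → F, IsOrthRep G u}

/-- An independent representation of `G` over `F`. -/
def IsIndRep {V F : Type*} [Field F] {t : ℕ} (G : SimpleGraph V) (u : V → Fin t → F) : Prop :=
  ∀ v, u v ∉ Submodule.span F (u '' G.neighborSet v)

/-- A proper coloring of `G`. -/
def IsProperColoring {V C : Type*} (G : SimpleGraph V) (c : V → C) : Prop :=
  ∀ ⦃v w⦄, G.Adj v w → c v ≠ c w

/-- The coloring has locality at most `ℓ`: at most `ℓ` colors in every closed neighborhood. -/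
def ColoringLocalityLE {V C : Type*} (G : SimpleGraph V) (c : V → C) (ℓ : ℕ) : Prop :=
  ∀ v, (c '' insert v (G.neighborSet v)).ncard ≤ ℓ

/-- The local chromatic number of `G`. -/
noncomputable def locChrom {V : Type*} (G : SimpleGraph V) : ℕ :=
  sInf {ℓ | ∃ c : V → ℕ, IsProperColoring G c ∧ ColoringLocalityLE G c ℓ}

/-- `M` represents the graph `G`. -/
def MatRepresents {V F : Type*} [Field F] (G : SimpleGraph V) (M : Matrix V V F) : Prop :=
  (∀ i, M i i ≠ 0) ∧ ∀ ⦃i j⦄, i ≠ j → ¬ G.Adj i j → M i j = 0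

/-- The minrank of `G` over `F`. -/
noncomputable def minrank {V : Type*} [Fintype V] (F : Type*) [Field F] (G : SimpleGraph V) : ℕ :=
  sInf {r | ∃ M : Matrix V V F, MatRepresents G M ∧ M.rank = r}

/-!
A proper 2-colouring `c` gives the representation `v ↦ e_{c v}` in `F²`, whose locality is
trivially at most `2`. Conversely, take a representation of locality at most `2` (one exists
because the standard basis indexed by the vertices is a representation). If `v ∼ w ∼ x`, the
closed neighbourhood of `w` spans the plane of the orthogonal anisotropic vectors `u v, u w`, so
`u x`, being orthogonal to `u w`, is a multiple of `u v`. Along a walk the vectors therefore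
alternate between the line of the start and the line of one of its neighbours; an odd closed
walk at `a` would put `u a` on the line of a neighbour, contradicting orthogonality. Hence all
closed walks are even and `G` is bipartite.
-/

section DotProduct

variable {ι F : Type*} [Fintype ι] [Field F] {p q x : ι → F}

lemma linearIndependent_pair_of_dotProduct_eq_zero (hp : p ⬝ᵥ p ≠ 0) (hq : q ⬝ᵥ q ≠ 0)
    (hpq : p ⬝ᵥ q = 0) : LinearIndependent F ![p, q] := by
  rw [LinearIndependent.pair_iff]
  intro s r hsr
  have hs : s * (p ⬝ᵥ p) = 0 := by
    simpa [dotProduct_add, dotProduct_comm q p, hpq] using congrArg (p ⬝ᵥ ·) hsr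
  have hr : r * (q ⬝ᵥ q) = 0 := by
    simpa [dotProduct_add, dotProduct_comm q p, hpq] using congrArg (q ⬝ᵥ ·) hsr
  exact ⟨(mul_eq_zero.1 hs).resolve_right hp, (mul_eq_zero.1 hr).resolve_right hq⟩

lemma finrank_span_pair_of_dotProduct_eq_zero (hp : p ⬝ᵥ p ≠ 0) (hq : q ⬝ᵥ q ≠ 0)
    (hpq : p ⬝ᵥ q = 0) : Module.finrank F (Submodule.span F {p, q}) = 2 := by
  have h := finrank_span_eq_card (linearIndependent_pair_of_dotProduct_eq_zero hp hq hpq)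
  rwa [Matrix.range_cons, Matrix.range_cons, Matrix.range_empty, Set.union_empty,
    Set.singleton_union, Fintype.card_fin] at h

lemma mem_span_singleton_of_mem_span_pair (hx : x ∈ Submodule.span F {p, q})
    (hq : q ⬝ᵥ q ≠ 0) (hpq : p ⬝ᵥ q = 0) (hxq : x ⬝ᵥ q = 0) : x ∈ F ∙ p := by
  obtain ⟨a, b, rfl⟩ := Submodule.mem_span_pair.1 hx
  have hb : b * (q ⬝ᵥ q) = 0 := by simpa [add_dotProduct, hpq] using hxq
  exact Submodule.mem_span_singleton.2 ⟨a, by simp [(mul_eq_zero.1 hb).resolve_right hq]⟩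

end DotProduct

namespace IsOrthRep

variable {V F : Type*} [Field F] {t : ℕ} {G : SimpleGraph V} {u : V → Fin t → F}

lemma ne_zero (hu : IsOrthRep G u) (v : V) : u v ≠ 0 := fun hv => hu.1 v (by simp [hv])

lemma not_mem_span_singleton_of_adj (hu : IsOrthRep G u) {v w : V} (hvw : G.Adj v w) :
    u w ∉ F ∙ u v := by
  intro hw
  obtain ⟨a, ha⟩ := Submodule.mem_span_singleton.1 hw
  have h : a * (u v ⬝ᵥ u v) = 0 := by simpa [← ha] using hu.2 hvw
  rcases mul_eq_zero.1 h with rfl | h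
  · exact hu.ne_zero w (by simp [← ha])
  · exact hu.1 v h

lemma mem_span_singleton_of_adj_of_adj (hu : IsOrthRep G u) (hloc : RepLocalityLE G u 2)
    {v w x : V} (hvw : G.Adj v w) (hwx : G.Adj w x) : u x ∈ F ∙ u v := by
  set S := Submodule.span F (u '' insert w (G.neighborSet w))
  have mem_S : ∀ y ∈ insert w (G.neighborSet w), u y ∈ S :=
    fun y hy => Submodule.subset_span ⟨y, hy, rfl⟩
  have hle : Submodule.span F {u v, u w} ≤ S := by
    rw [Submodule.span_le, Set.insert_subset_iff, Set.singleton_subset_iff]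
    exact ⟨mem_S v (Or.inr hvw.symm), mem_S w (Or.inl rfl)⟩
  have hplane : Submodule.span F {u v, u w} = S :=
    Submodule.eq_of_le_of_finrank_le hle <| by
      rw [finrank_span_pair_of_dotProduct_eq_zero (hu.1 v) (hu.1 w) (hu.2 hvw)]
      exact hloc w
  refine mem_span_singleton_of_mem_span_pair ?_ (hu.1 w) (hu.2 hvw) ?_
  · exact hplane ▸ mem_S x (Or.inr hwx)
  · rw [dotProduct_comm]
    exact hu.2 hwx

lemma mem_span_singleton_of_walk (hu : IsOrthRep G u) (hloc : RepLocalityLE G u 2)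
    {a b : V} (p : G.Walk a b) :
    (Even p.length → u b ∈ F ∙ u a) ∧ (Odd p.length → ∃ w, G.Adj a w ∧ u b ∈ F ∙ u w) := by
  induction p with
  | nil => simp
  | @cons a x b hax q ih =>
    rw [SimpleGraph.Walk.length_cons, Nat.even_add_one, Nat.odd_add_one, Nat.not_even_iff_odd,
      Nat.not_odd_iff_even]
    refine ⟨fun hq => ?_, fun hq => ⟨x, hax, ih.1 hq⟩⟩
    obtain ⟨w, hxw, hbw⟩ := ih.2 hq
    exact Submodule.mem_span_singleton_trans hbw (hu.mem_span_singleton_of_adj_of_adj hloc hax hxw)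

lemma colorable_two (hu : IsOrthRep G u) (hloc : RepLocalityLE G u 2) : G.Colorable 2 := by
  refine SimpleGraph.two_colorable_iff_forall_loop_even.2 fun a p => ?_
  by_contra hodd
  obtain ⟨w, haw, hw⟩ := (hu.mem_span_singleton_of_walk hloc p).2 (Nat.not_even_iff_odd.1 hodd)
  exact hu.not_mem_span_singleton_of_adj haw.symm hw

end IsOrthRep

section Coloring

variable {V F : Type*} [Field F] {t : ℕ} {G : SimpleGraph V}

lemma isOrthRep_single (c : G.Coloring (Fin t)) :
    IsOrthRep G (fun v => (Pi.single (c v) 1 : Fin t → F)) := by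
  refine ⟨fun _ => by simp, fun v w hvw => ?_⟩
  simp [Pi.single_eq_of_ne (c.valid hvw).symm]

lemma repLocalityLE_self (G : SimpleGraph V) (u : V → Fin t → F) : RepLocalityLE G u t :=
  fun _ => (Submodule.finrank_le _).trans_eq (Module.finrank_fin_fun F)

lemma locOrthDim_le_of_isOrthRep {u : V → Fin t → F} {ℓ : ℕ} (hu : IsOrthRep G u)
    (hloc : RepLocalityLE G u ℓ) : locOrthDim G F ≤ ℓ :=
  Nat.sInf_le ⟨t, u, hu, hloc⟩

variable (F) in
lemma locOrthDim_le_of_colorable (hG : G.Colorable t) :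
    locOrthDim G F ≤ t :=
  locOrthDim_le_of_isOrthRep (isOrthRep_single (F := F) hG.some) (repLocalityLE_self G _)

variable (F) in
lemma exists_isOrthRep_repLocalityLE_locOrthDim (hG : G.Colorable t) :
    ∃ (s : ℕ) (u : V → Fin s → F), IsOrthRep G u ∧ RepLocalityLE G u (locOrthDim G F) :=
  Nat.sInf_mem (s := {ℓ | ∃ (s : ℕ) (u : V → Fin s → F), IsOrthRep G u ∧ RepLocalityLE G u ℓ})
    ⟨t, t, _, isOrthRep_single hG.some, repLocalityLE_self G _⟩

end Coloring

theorem colorable_two_iff_locOrthDim_le_two {V : Type*} [Fintype V] (G : SimpleGraph V)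
    (F : Type*) [Field F] :
    G.Colorable 2 ↔ locOrthDim G F ≤ 2 := by
  refine ⟨locOrthDim_le_of_colorable F, fun hle => ?_⟩
  obtain ⟨t, u, hu, hloc⟩ := exists_isOrthRep_repLocalityLE_locOrthDim F G.colorable_of_fintype
  exact hu.colorable_two fun v => (hloc v).trans hle
end

section
/- Let G=(V,E) be a graph and F a field. Suppose there exist a proper coloring c: V → [m] of G and vectors u_1,...,u_m ∈ F^t such that for every vertex v, the vectors {u_{c(v')} : v' ∈ {v} ∪ N(v)} indexed by colors of the closed neighborhood of v are linearly independent over F. Then the minrank over F of the complement of G is at most t. -/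
open Matrix

/-! The vectors `u (c v)` form an independent representation of `G`: properness puts the colors
of the neighbours of `v` among the closed-neighbourhood colors other than `c v`. For each `v`
pick `a v` with `a v ⬝ᵥ u (c v) ≠ 0` vanishing on the span of the neighbours' vectors; the
matrix `(a v ⬝ᵥ u (c w))` then represents `Gᶜ` and factors through `F^t`. -/

theorem Submodule.exists_dotProduct_ne_zero_of_notMem {F ι : Type*} [Field F] [Fintype ι]
    [DecidableEq ι] {p : Submodule F (ι → F)} {x : ι → F} (hx : x ∉ p) :
    ∃ a : ι → F, a ⬝ᵥ x ≠ 0 ∧ ∀ y ∈ p, a ⬝ᵥ y = 0 := by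
  obtain ⟨f, hfx, hpf⟩ := p.exists_le_ker_of_notMem hx
  have hf : ∀ y, (dotProductEquiv F ι).symm f ⬝ᵥ y = f y := fun y =>
    LinearMap.congr_fun ((dotProductEquiv F ι).apply_symm_apply f) y
  exact ⟨(dotProductEquiv F ι).symm f, by rwa [hf], fun y hy => by rw [hf]; exact hpf hy⟩

theorem Matrix.rank_of_dotProduct_le {m n ι R : Type*} [Fintype n] [Fintype ι] [CommRing R]
    [StrongRankCondition R] (a : m → ι → R) (b : n → ι → R) :
    (of fun i j => a i ⬝ᵥ b j).rank ≤ Fintype.card ι :=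
  calc (of fun i j => a i ⬝ᵥ b j).rank = (of a * (of b)ᵀ).rank := rfl
    _ ≤ (of b)ᵀ.rank := rank_mul_le_right _ _
    _ ≤ Fintype.card ι := rank_le_card_height _

theorem minrank_compl_le_of_isIndRep {V F : Type*} [Fintype V] [Field F] {t : ℕ}
    {G : SimpleGraph V} {x : V → Fin t → F} (hx : IsIndRep G x) : minrank F Gᶜ ≤ t := by
  choose a hax ha using fun v => Submodule.exists_dotProduct_ne_zero_of_notMem (hx v)
  have hrep : MatRepresents Gᶜ (of fun v w => a v ⬝ᵥ x w) := by
    refine ⟨hax, fun v w hvw hnadj => ha v (x w) (Submodule.subset_span ⟨w, ?_, rfl⟩)⟩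
    simpa [SimpleGraph.compl_adj, hvw] using hnadj
  calc minrank F Gᶜ ≤ (of fun v w => a v ⬝ᵥ x w).rank := Nat.sInf_le ⟨_, hrep, rfl⟩
    _ ≤ t := (rank_of_dotProduct_le a x).trans_eq (Fintype.card_fin t)

theorem isIndRep_comp_of_linearIndepOn {V C F : Type*} [Field F] {t : ℕ} {G : SimpleGraph V}
    {c : V → C} {u : C → Fin t → F} (hc : IsProperColoring G c)
    (hu : ∀ v, LinearIndepOn F u (c '' insert v (G.neighborSet v))) : IsIndRep G (u ∘ c) := by
  intro v
  have hsub : c '' G.neighborSet v ⊆ c '' insert v (G.neighborSet v) \ {c v} := by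
    rintro _ ⟨w, hw, rfl⟩
    exact ⟨⟨w, Set.mem_insert_of_mem v hw, rfl⟩, (hc hw).symm⟩
  rw [Set.image_comp]
  exact fun hmem => (hu v).notMem_span (Set.mem_image_of_mem c (Set.mem_insert v _))
    (Submodule.span_mono (Set.image_mono hsub) hmem)

theorem minrank_compl_le_of_coloring_indep {V : Type*} [Fintype V] (G : SimpleGraph V)
    (F : Type*) [Field F] {m t : ℕ} (c : V → Fin m) (u : Fin m → Fin t → F)
    (hc : IsProperColoring G c)
    (hind : ∀ v : V, LinearIndependent F
      (fun x : ↥(c '' insert v (G.neighborSet v)) => u ↑x)) :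
    minrank F Gᶜ ≤ t :=
  minrank_compl_le_of_isIndRep (isIndRep_comp_of_linearIndepOn hc hind)
end

section
/- Let G be a graph, F a field, and suppose there exist a proper coloring of G with m colors and locality ℓ, and m vectors in F^t such that every ℓ of them are linearly independent over F. Then the minrank over F of the complement of G is at most t. -/
open Matrix

/-!
In a proper colouring of locality `ℓ`, a closed neighbourhood `{v} ∪ N(v)` sees at most `ℓ`
colours and `c v` is not the colour of any neighbour, so `u (c v)` lies outside the span of the
vectors `u (c x)`, `x ∈ N(v)`: `u ∘ c` is an independent representation. Choosing for each `v` a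
vector `w v` orthogonal to that span but not to `u (c v)`, the matrix `(w v ⬝ᵥ u (c x))` represents
`Gᶜ` and factors through `F^t`, so its rank is at most `t`.
-/

theorem exists_dotProduct_ne_zero_of_notMem_span {F n : Type*} [Field F] [Fintype n]
    {s : Set (n → F)} {x : n → F} (hx : x ∉ Submodule.span F s) :
    ∃ w : n → F, w ⬝ᵥ x ≠ 0 ∧ ∀ y ∈ s, w ⬝ᵥ y = 0 := by
  classical
  obtain ⟨f, hfx, hf⟩ := Submodule.exists_dual_map_eq_bot_of_notMem hx inferInstance
  have hdot (y : n → F) : (dotProductEquiv F n).symm f ⬝ᵥ y = f y :=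
    LinearMap.congr_fun ((dotProductEquiv F n).apply_symm_apply f) y
  refine ⟨(dotProductEquiv F n).symm f, by rwa [hdot], fun y hy => ?_⟩
  rw [hdot, ← Submodule.mem_bot F, ← hf]
  exact Submodule.mem_map_of_mem (Submodule.subset_span hy)

theorem minrank_le_rank {V F : Type*} [Fintype V] [Field F] {G : SimpleGraph V}
    {M : Matrix V V F} (hM : MatRepresents G M) : minrank F G ≤ M.rank :=
  Nat.sInf_le ⟨M, hM, rfl⟩

theorem IsIndRep.minrank_compl_le {V F : Type*} [Fintype V] [Field F] {t : ℕ}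
    {G : SimpleGraph V} {u : V → Fin t → F} (hu : IsIndRep G u) : minrank F Gᶜ ≤ t := by
  choose w hw_self hw_adj using fun v => exists_dotProduct_ne_zero_of_notMem_span (hu v)
  have hrep : MatRepresents Gᶜ (of w * (of u)ᵀ) := by
    refine ⟨hw_self, fun i j hij hnadj => hw_adj i _ ⟨j, ?_, rfl⟩⟩
    simpa [hij] using hnadj
  calc minrank F Gᶜ ≤ (of w * (of u)ᵀ).rank := minrank_le_rank hrep
    _ ≤ (of w).rank := rank_mul_le_left _ _
    _ ≤ t := (rank_le_card_width _).trans_eq (Fintype.card_fin t)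

theorem IsProperColoring.isIndRep_comp {V ι F : Type*} [Finite ι] [Field F] {t ℓ : ℕ}
    {G : SimpleGraph V} {c : V → ι} {u : ι → Fin t → F} (hc : IsProperColoring G c)
    (hloc : ColoringLocalityLE G c ℓ)
    (hind : ∀ s : Finset ι, s.card ≤ ℓ → LinearIndepOn F u (s : Set ι)) :
    IsIndRep G (u ∘ c) := by
  intro v
  have hcv : c v ∉ c '' G.neighborSet v := fun ⟨w, hvw, hcw⟩ => hc hvw hcw.symm
  have hlin : LinearIndepOn F u (insert (c v) (c '' G.neighborSet v)) := by
    rw [← Set.image_insert_eq, ← (Set.toFinite (c '' insert v (G.neighborSet v))).coe_toFinset]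
    exact hind _ (by rw [← Set.ncard_eq_toFinset_card]; exact hloc v)
  rw [Set.image_comp]
  exact ((linearIndepOn_insert hcv).mp hlin).2

theorem minrank_compl_le_of_local_coloring {V : Type*} [Fintype V] (G : SimpleGraph V)
    (F : Type*) [Field F] {m t ℓ : ℕ} (c : V → Fin m) (u : Fin m → Fin t → F)
    (hc : IsProperColoring G c) (hloc : ColoringLocalityLE G c ℓ)
    (hind : ∀ s : Finset (Fin m), s.card ≤ ℓ →
      LinearIndependent F (fun x : ↥s => u ↑x)) :
    minrank F Gᶜ ≤ t :=
  (hc.isIndRep_comp hloc hind).minrank_compl_le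
end

section
/- Let H be a collection of h subsets of [m], each of size at most ℓ, and let F be a finite field of size q. Set t = ℓ + ⌈log_q h⌉. Then there exist vectors u_1,...,u_m ∈ F^t such that for every H' ∈ H, the vectors {u_i : i ∈ H'} are linearly independent over F. -/
open Matrix

/-
Choose the vectors one index at a time. When the vector of index `i` is chosen, it must avoid,
for every `H ∈ 𝓗` containing `i`, the span of the vectors already chosen for the other members
of `H`: a subspace of dimension less than `ℓ`, hence with at most `q^(ℓ-1)` elements. These `h`
forbidden subspaces cover at most `h q^(ℓ-1) ≤ q^(t-1) < q^t` vectors, so a good choice exists,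
and adding a vector outside the span of an independent family keeps it independent.
-/

open Module Finset

section Greedy

variable {F V : Type*} [DivisionRing F] [Fintype F] [AddCommGroup V] [Module F V] [Fintype V]

-- `hcard` is `#s * |F| ^ (ℓ - 1) < |V|`, multiplied by `|F|` to avoid truncated subtraction.
theorem Submodule.exists_forall_notMem_of_card_mul_pow_lt {κ : Type*} (s : Finset κ)
    (W : κ → Submodule F V) (ℓ : ℕ) (hW : ∀ j ∈ s, finrank F (W j) < ℓ)
    (hcard : #s * Fintype.card F ^ ℓ < Fintype.card F * Fintype.card V) :
    ∃ v : V, ∀ j ∈ s, v ∉ W j := by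
  classical
  set q := Fintype.card F
  have hq : 0 < q := Fintype.card_pos
  have hW_card : ∀ j ∈ s, q * #{v | v ∈ W j} ≤ q ^ ℓ := fun j hj => by
    rw [← Fintype.card_subtype, Module.card_eq_pow_finrank (K := F), ← pow_succ']
    exact Nat.pow_le_pow_right hq (hW j hj)
  have hbad : q * #(s.biUnion fun j => {v | v ∈ W j}) < q * #(univ : Finset V) :=
    calc q * #(s.biUnion fun j => {v | v ∈ W j})
        ≤ ∑ j ∈ s, q * #{v | v ∈ W j} := by
          rw [← mul_sum]; exact Nat.mul_le_mul_left q card_biUnion_le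
      _ ≤ #s * q ^ ℓ := sum_le_card_nsmul _ _ _ hW_card
      _ < q * #(univ : Finset V) := hcard
  obtain ⟨v, -, hv⟩ := exists_mem_notMem_of_card_lt_card (Nat.lt_of_mul_lt_mul_left hbad)
  exact ⟨v, fun j hj hvj => hv (mem_biUnion.mpr ⟨j, hj, by simpa using hvj⟩)⟩

variable {ι : Type*} {𝓗 : Finset (Finset ι)} {ℓ : ℕ}

theorem exists_update_linearIndepOn_inter_insert [DecidableEq ι]
    (hsize : ∀ H ∈ 𝓗, #H ≤ ℓ)
    (hcard : #𝓗 * Fintype.card F ^ ℓ < Fintype.card F * Fintype.card V)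
    {u : ι → V} {S : Finset ι} {i : ι} (hi : i ∉ S)
    (hu : ∀ H ∈ 𝓗, LinearIndepOn F u ↑(H ∩ S)) :
    ∃ v : V, ∀ H ∈ 𝓗,
      LinearIndepOn F (Function.update u i v) ↑(H ∩ insert i S) := by
  classical
  have hrank :
      ∀ H ∈ {H ∈ 𝓗 | i ∈ H}, finrank F (Submodule.span F (u '' ↑(H ∩ S))) < ℓ := by
    intro H hH
    obtain ⟨hH, hiH⟩ := mem_filter.mp hH
    have hssub : H ∩ S ⊂ H :=
      ssubset_of_subset_of_ne inter_subset_left fun h => hi (mem_of_mem_inter_right (h ▸ hiH))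
    calc finrank F (Submodule.span F (u '' ↑(H ∩ S)))
        ≤ #((H ∩ S).image u) := by rw [← coe_image]; exact finrank_span_finset_le_card _
      _ ≤ #(H ∩ S) := card_image_le
      _ < ℓ := (card_lt_card hssub).trans_le (hsize H hH)
  obtain ⟨v, hv⟩ := Submodule.exists_forall_notMem_of_card_mul_pow_lt _ _ ℓ hrank
    ((Nat.mul_le_mul_right _ (card_filter_le _ _)).trans_lt hcard)
  refine ⟨v, fun H hH => ?_⟩
  have hagree : Set.EqOn u (Function.update u i v) ↑(H ∩ S) := fun j hj =>
    (Function.update_of_ne (ne_of_mem_of_not_mem (mem_of_mem_inter_right hj) hi) _ _).symm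
  by_cases hiH : i ∈ H
  · rw [inter_insert_of_mem hiH, coe_insert,
      linearIndepOn_insert fun h => hi (mem_of_mem_inter_right h), ← hagree.image_eq,
      Function.update_self]
    exact ⟨(hu H hH).congr hagree, hv H (mem_filter.mpr ⟨hH, hiH⟩)⟩
  · rw [inter_insert_of_notMem hiH]
    exact (hu H hH).congr hagree

theorem exists_linearIndepOn_of_card_mul_pow_lt (hsize : ∀ H ∈ 𝓗, #H ≤ ℓ)
    (hcard : #𝓗 * Fintype.card F ^ ℓ < Fintype.card F * Fintype.card V) :
    ∃ u : ι → V, ∀ H ∈ 𝓗, LinearIndepOn F u ↑H := by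
  classical
  suffices ∀ S : Finset ι, ∃ u : ι → V, ∀ H ∈ 𝓗, LinearIndepOn F u ↑(H ∩ S) by
    obtain ⟨u, hu⟩ := this (𝓗.sup id)
    refine ⟨u, fun H hH => ?_⟩
    have hHS : H ⊆ 𝓗.sup id := le_sup (f := id) hH
    simpa only [inter_eq_left.mpr hHS] using hu H hH
  intro S
  induction S using Finset.induction_on with
  | empty => exact ⟨0, fun H _ => by simp⟩
  | insert i S hi ih =>
    obtain ⟨u, hu⟩ := ih
    obtain ⟨v, hv⟩ := exists_update_linearIndepOn_inter_insert hsize hcard hi hu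
    exact ⟨_, hv⟩

end Greedy

theorem exists_vectors_linearIndependent_on_family {F : Type*} [Field F] [Fintype F]
    (m ℓ : ℕ) (𝓗 : Finset (Finset (Fin m))) (hsize : ∀ H ∈ 𝓗, H.card ≤ ℓ) :
    ∃ u : Fin m → Fin (ℓ + Nat.clog (Fintype.card F) 𝓗.card) → F,
      ∀ H ∈ 𝓗, LinearIndependent F (fun x : ↥H => u ↑x) := by
  set q := Fintype.card F
  have hq : 1 < q := Fintype.one_lt_card
  have hcard : #𝓗 * q ^ ℓ < q * Fintype.card (Fin (ℓ + Nat.clog q #𝓗) → F) :=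
    calc #𝓗 * q ^ ℓ ≤ q ^ Nat.clog q #𝓗 * q ^ ℓ :=
          Nat.mul_le_mul_right _ (Nat.le_pow_clog hq _)
      _ < q * q ^ (ℓ + Nat.clog q #𝓗) := by
        rw [← pow_add, ← pow_succ', add_comm ℓ]; exact Nat.pow_lt_pow_succ hq
      _ = q * Fintype.card (Fin (ℓ + Nat.clog q #𝓗) → F) := by
        rw [Fintype.card_fun, Fintype.card_fin]
  exact exists_linearIndepOn_of_card_mul_pow_lt hsize hcard
end

section
/- Let H be the gadget graph on 6 vertices {i, a, b, j, c, d} whose edges are: the triangle {i,a,b}, the triangle {j,c,d}, and the matching edges {i,d}, {a,j}, {b,c}. Let F be a field, U a 3-dimensional subspace of F^t, and suppose (u_v) is an orthogonal representation of H over F with all vectors lying in U. Then either ⟨u_i, u_j⟩ = 0 or u_i = α·u_j for some α ∈ F. -/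
open Matrix

/-- The gadget graph `H_{i,j}` on vertices `i=0, a=1, b=2, j=3, c=4, d=5`:
two triangles `{i,a,b}`, `{j,c,d}` and the matching edges `{i,d}, {a,j}, {b,c}`. -/
def gadgetGraph : SimpleGraph (Fin 6) :=
  SimpleGraph.fromEdgeSet
    {s(0, 1), s(0, 2), s(1, 2), s(3, 4), s(3, 5), s(4, 5), s(0, 5), s(1, 3), s(2, 4)}

/-! The triangle `u i, u a, u b` consists of pairwise orthogonal non-isotropic vectors, so it is
an orthogonal basis of `U`, and inner products of vectors of `U` are computed in coordinates:
`⟨x, y⟩ = ∑ₖ ⟨x, eₖ⟩⟨y, eₖ⟩ / ⟨eₖ, eₖ⟩`. Each matching edge kills one coordinate of `u j`, `u c`,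
`u d`. If `⟨u j, u i⟩ ≠ 0`, the edges of the triangle `j c d` then force in turn `⟨u c, u i⟩ = 0`,
`⟨u d, u a⟩ = 0` and `⟨u j, u b⟩ = 0`, so `u j` is a multiple of `u i`. -/

section OrthogonalFamily

variable {ι n F : Type*} [Fintype n] [Field F] {e : ι → n → F}

theorem linearIndependent_of_pairwise_dotProduct_eq_zero
    (horth : Pairwise fun k l => e k ⬝ᵥ e l = 0) (hnorm : ∀ k, e k ⬝ᵥ e k ≠ 0) :
    LinearIndependent F e :=
  LinearMap.linearIndependent_of_isOrthoᵢ
    (B := (dotProductBilin F F : (n → F) →ₗ[F] (n → F) →ₗ[F] F)) horth hnorm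

variable [Fintype ι]

theorem eq_sum_smul_of_mem_span_of_pairwise_dotProduct_eq_zero
    (horth : Pairwise fun k l => e k ⬝ᵥ e l = 0) (hnorm : ∀ k, e k ⬝ᵥ e k ≠ 0)
    {x : n → F} (hx : x ∈ Submodule.span F (Set.range e)) :
    x = ∑ k, (x ⬝ᵥ e k / (e k ⬝ᵥ e k)) • e k := by
  obtain ⟨c, rfl⟩ := (Submodule.mem_span_range_iff_exists_fun F).mp hx
  refine Finset.sum_congr rfl fun k _ => ?_
  have hcoeff : (∑ l, c l • e l) ⬝ᵥ e k = c k * (e k ⬝ᵥ e k) := by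
    simp only [sum_dotProduct, smul_dotProduct, smul_eq_mul]
    exact Finset.sum_eq_single k (fun l _ hlk => by rw [horth hlk, mul_zero]) (by simp)
  rw [hcoeff, mul_div_cancel_right₀ _ (hnorm k)]

theorem dotProduct_eq_sum_of_mem_span_of_pairwise_dotProduct_eq_zero
    (horth : Pairwise fun k l => e k ⬝ᵥ e l = 0) (hnorm : ∀ k, e k ⬝ᵥ e k ≠ 0)
    {x : n → F} (hx : x ∈ Submodule.span F (Set.range e)) (y : n → F) :
    x ⬝ᵥ y = ∑ k, (x ⬝ᵥ e k) * (y ⬝ᵥ e k) / (e k ⬝ᵥ e k) := by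
  conv_lhs => rw [eq_sum_smul_of_mem_span_of_pairwise_dotProduct_eq_zero horth hnorm hx]
  simp only [sum_dotProduct, smul_dotProduct, smul_eq_mul, dotProduct_comm (e _) y]
  exact Finset.sum_congr rfl fun k _ => by ring

theorem span_range_eq_of_pairwise_dotProduct_eq_zero {U : Submodule F (n → F)}
    (hcard : Fintype.card ι = Module.finrank F U) (he : ∀ k, e k ∈ U)
    (horth : Pairwise fun k l => e k ⬝ᵥ e l = 0) (hnorm : ∀ k, e k ⬝ᵥ e k ≠ 0) :
    Submodule.span F (Set.range e) = U := by
  refine Submodule.eq_of_le_of_finrank_le ?_ ?_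
  · exact Submodule.span_le.mpr (Set.range_subset_iff.mpr he)
  · rw [finrank_span_eq_card (linearIndependent_of_pairwise_dotProduct_eq_zero horth hnorm),
      hcard]

end OrthogonalFamily

namespace IsOrthRep

variable {V ι F : Type*} [Field F] {t : ℕ} {G : SimpleGraph V}
  {u : V → Fin t → F} {s : ι → V} {U : Submodule F (Fin t → F)}

theorem pairwise_dotProduct_eq_zero (hrep : IsOrthRep G u)
    (hs : Pairwise fun k l => G.Adj (s k) (s l)) :
    Pairwise fun k l => u (s k) ⬝ᵥ u (s l) = 0 :=
  fun _ _ hkl => hrep.2 (hs hkl)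

variable [Fintype ι]

theorem span_range_comp_eq (hrep : IsOrthRep G u)
    (hs : Pairwise fun k l => G.Adj (s k) (s l))
    (hcard : Fintype.card ι = Module.finrank F U) (hmem : ∀ k, u (s k) ∈ U) :
    Submodule.span F (Set.range (u ∘ s)) = U :=
  span_range_eq_of_pairwise_dotProduct_eq_zero hcard hmem
    (hrep.pairwise_dotProduct_eq_zero hs) fun _ => hrep.1 _

theorem eq_sum_smul_of_pairwise_adj (hrep : IsOrthRep G u)
    (hs : Pairwise fun k l => G.Adj (s k) (s l))
    (hcard : Fintype.card ι = Module.finrank F U) (hmem : ∀ k, u (s k) ∈ U)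
    {x : Fin t → F} (hx : x ∈ U) :
    x = ∑ k, (x ⬝ᵥ u (s k) / (u (s k) ⬝ᵥ u (s k))) • u (s k) :=
  eq_sum_smul_of_mem_span_of_pairwise_dotProduct_eq_zero (e := u ∘ s)
    (hrep.pairwise_dotProduct_eq_zero hs) (fun _ => hrep.1 _)
    ((hrep.span_range_comp_eq hs hcard hmem).symm ▸ hx)

theorem dotProduct_eq_sum_of_pairwise_adj (hrep : IsOrthRep G u)
    (hs : Pairwise fun k l => G.Adj (s k) (s l))
    (hcard : Fintype.card ι = Module.finrank F U) (hmem : ∀ k, u (s k) ∈ U)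
    {x : Fin t → F} (hx : x ∈ U) (y : Fin t → F) :
    x ⬝ᵥ y = ∑ k, (x ⬝ᵥ u (s k)) * (y ⬝ᵥ u (s k)) / (u (s k) ⬝ᵥ u (s k)) :=
  dotProduct_eq_sum_of_mem_span_of_pairwise_dotProduct_eq_zero (e := u ∘ s)
    (hrep.pairwise_dotProduct_eq_zero hs) (fun _ => hrep.1 _)
    ((hrep.span_range_comp_eq hs hcard hmem).symm ▸ hx) y

end IsOrthRep

theorem gadgetGraph_pairwise_adj_triangle :
    Pairwise fun k l => gadgetGraph.Adj (![0, 1, 2] k) (![0, 1, 2] l) := by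
  intro k l hkl
  fin_cases k <;> fin_cases l <;> simp_all [gadgetGraph]

theorem gadget_dotProduct_three_two_eq_zero {F : Type*} [Field F] {t : ℕ}
    {U : Submodule F (Fin t → F)} {u : Fin 6 → Fin t → F} (hU : Module.finrank F U = 3)
    (hrep : IsOrthRep gadgetGraph u) (hmem : ∀ v, u v ∈ U) (h30 : u 3 ⬝ᵥ u 0 ≠ 0) :
    u 3 ⬝ᵥ u 2 = 0 := by
  have orth (v w : Fin 6) (h : gadgetGraph.Adj v w) : u v ⬝ᵥ u w = 0 := hrep.2 h
  have parseval (v w : Fin 6) :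
      u v ⬝ᵥ u w = u v ⬝ᵥ u 0 * (u w ⬝ᵥ u 0) / (u 0 ⬝ᵥ u 0) +
        u v ⬝ᵥ u 1 * (u w ⬝ᵥ u 1) / (u 1 ⬝ᵥ u 1) + u v ⬝ᵥ u 2 * (u w ⬝ᵥ u 2) / (u 2 ⬝ᵥ u 2) := by
    rw [hrep.dotProduct_eq_sum_of_pairwise_adj gadgetGraph_pairwise_adj_triangle
      (by simp [hU]) (fun _ => hmem _) (hmem v), Fin.sum_univ_three]
    rfl
  have h31 : u 3 ⬝ᵥ u 1 = 0 := orth 3 1 (by simp [gadgetGraph])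
  have h42 : u 4 ⬝ᵥ u 2 = 0 := orth 4 2 (by simp [gadgetGraph])
  have h50 : u 5 ⬝ᵥ u 0 = 0 := orth 5 0 (by simp [gadgetGraph])
  have h40 : u 4 ⬝ᵥ u 0 = 0 := by
    simpa [orth 3 4 (by simp [gadgetGraph]), h31, h42, h30, hrep.1, eq_comm (a := (0 : F))]
      using parseval 3 4
  have h41 : u 4 ⬝ᵥ u 1 ≠ 0 := fun h => hrep.1 4 (by simpa [h40, h42, h] using parseval 4 4)
  have h51 : u 5 ⬝ᵥ u 1 = 0 := by
    simpa [orth 4 5 (by simp [gadgetGraph]), h40, h42, h41, hrep.1, eq_comm (a := (0 : F))]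
      using parseval 4 5
  have h52 : u 5 ⬝ᵥ u 2 ≠ 0 := fun h => hrep.1 5 (by simpa [h50, h51, h] using parseval 5 5)
  simpa [orth 3 5 (by simp [gadgetGraph]), h31, h50, h52, hrep.1, eq_comm (a := (0 : F))]
    using parseval 3 5

theorem gadget_orthRep_cases {F : Type*} [Field F] {t : ℕ}
    (U : Submodule F (Fin t → F)) (hU : Module.finrank F U = 3)
    (u : Fin 6 → Fin t → F) (hrep : IsOrthRep gadgetGraph u)
    (hmem : ∀ v, u v ∈ U) :
    u 0 ⬝ᵥ u 3 = 0 ∨ ∃ α : F, u 0 = α • u 3 := by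
  by_cases h03 : u 0 ⬝ᵥ u 3 = 0
  · exact .inl h03
  have h30 : u 3 ⬝ᵥ u 0 ≠ 0 := by rwa [dotProduct_comm]
  have h31 : u 3 ⬝ᵥ u 1 = 0 := hrep.2 (by simp [gadgetGraph])
  have h32 := gadget_dotProduct_three_two_eq_zero hU hrep hmem h30
  have hu3 : u 3 = (u 3 ⬝ᵥ u 0 / (u 0 ⬝ᵥ u 0)) • u 0 := by
    simpa [Fin.sum_univ_three, h31, h32] using
      hrep.eq_sum_smul_of_pairwise_adj gadgetGraph_pairwise_adj_triangle (by simp [hU])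
        (fun _ => hmem _) (hmem 3)
  refine .inr ⟨(u 3 ⬝ᵥ u 0 / (u 0 ⬝ᵥ u 0))⁻¹, ?_⟩
  rw [eq_inv_smul_iff₀ (div_ne_zero h30 (hrep.1 0)), ← hu3]
end
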